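/- Suppose cin(a,P) holds (P contains an input on a under some process context) and P →* Q. Then exactly one of the following holds: (1) cin(a,Q); or (2) a ∉ Names(Q) and there exist R_a, R'_a with P →* R_a → R'_a →* Q, Names(R_a) = Names(R'_a) ⊎ {a}, and sync(a, R_a). -/
import Mathlib


/-- Finite CCS processes: 0, input prefix a.P, output prefix ā.P, parallel. -/
inductive Proc : Type where
  | nil : Proc
  | inp : ℕ → Proc → Proc
  | out : ℕ → Proc → Proc
  | par : Proc → Proc → Proc

open Proc

/-- Structural equivalence: smallest congruence with unit, commutativity, associativity. -/
inductive StrEq : Proc → Proc → Prop where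
  | refl (P) : StrEq P P
  | symm {P Q} : StrEq P Q → StrEq Q P
  | trans {P Q R} : StrEq P Q → StrEq Q R → StrEq P R
  | nilPar (P) : StrEq (par P nil) P
  | comm (P Q) : StrEq (par P Q) (par Q P)
  | assoc (P Q R) : StrEq (par P (par Q R)) (par (par P Q) R)
  | congPar {P P' Q Q'} : StrEq P P' → StrEq Q Q' → StrEq (par P Q) (par P' Q')
  | congInp (a) {P P'} : StrEq P P' → StrEq (inp a P) (inp a P')
  | congOut (a) {P P'} : StrEq P P' → StrEq (out a P) (out a P')

/-- Reduction: a.P ‖ ā.Q → P ‖ Q, closed under parallel contexts and ≡. -/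
inductive Red : Proc → Proc → Prop where
  | comm (a P Q) : Red (par (inp a P) (out a Q)) (par P Q)
  | parL {P P'} (Q) : Red P P' → Red (par P Q) (par P' Q)
  | parR (P) {Q Q'} : Red Q Q' → Red (par P Q) (par P Q')
  | str {P P' Q Q'} : StrEq P P' → Red P' Q' → StrEq Q' Q → Red P Q

/-- Reflexive-transitive closure of reduction. -/
def Reds : Proc → Proc → Prop := Relation.ReflTransGen Red

/-- The set of names occurring in a process (ignoring polarity). -/
def names : Proc → Finset ℕ
  | nil => ∅
  | inp a P => insert a (names P)
  | out a P => insert a (names P)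
  | par P Q => names P ∪ names Q

/-- Number of input occurrences of a name. -/
def inCount (a : ℕ) : Proc → ℕ
  | nil => 0
  | inp b P => (if b = a then 1 else 0) + inCount a P
  | out _ P => inCount a P
  | par P Q => inCount a P + inCount a Q

/-- Number of output occurrences of a name. -/
def outCount (a : ℕ) : Proc → ℕ
  | nil => 0
  | inp _ P => outCount a P
  | out b P => (if b = a then 1 else 0) + outCount a P
  | par P Q => outCount a P + outCount a Q

/-- Linearity: each name occurs at most once as input and at most once as output. -/
def Linear (P : Proc) : Prop := ∀ a, inCount a P ≤ 1 ∧ outCount a P ≤ 1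

/-- in(a,P): P ≡ P' ‖ a.P''. -/
def InPred (a : ℕ) (P : Proc) : Prop := ∃ P' P'', StrEq P (par P' (inp a P''))

/-- out(a,P): P ≡ P' ‖ ā.P''. -/
def OutPred (a : ℕ) (P : Proc) : Prop := ∃ P' P'', StrEq P (par P' (out a P''))

/-- sync(a,P): both in(a,P) and out(a,P). -/
def SyncPred (a : ℕ) (P : Proc) : Prop := InPred a P ∧ OutPred a P

/-- wait(a,P): in(a,P) exclusive-or out(a,P). -/
def WaitPred (a : ℕ) (P : Proc) : Prop := Xor' (InPred a P) (OutPred a P)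

/-- Process contexts C ::= [-] | P‖C | C‖P | α.C. -/
inductive Ctx : Type where
  | hole : Ctx
  | parL : Proc → Ctx → Ctx
  | parR : Ctx → Proc → Ctx
  | inp : ℕ → Ctx → Ctx
  | out : ℕ → Ctx → Ctx

/-- Filling a process context. -/
def Ctx.fill : Ctx → Proc → Proc
  | .hole, Q => Q
  | .parL P C, Q => Proc.par P (C.fill Q)
  | .parR C P, Q => Proc.par (C.fill Q) P
  | .inp a C, Q => Proc.inp a (C.fill Q)
  | .out a C, Q => Proc.out a (C.fill Q)

/-- Evaluation contexts E ::= [-] | P‖E | E‖P. -/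
inductive ECtx : Type where
  | hole : ECtx
  | parL : Proc → ECtx → ECtx
  | parR : ECtx → Proc → ECtx

/-- Filling an evaluation context. -/
def ECtx.fill : ECtx → Proc → Proc
  | .hole, Q => Q
  | .parL P E, Q => Proc.par P (E.fill Q)
  | .parR E P, Q => Proc.par (E.fill Q) P

/-- cin(a,P): an input prefix on a occurs anywhere in P. -/
def CInPred (a : ℕ) (P : Proc) : Prop := ∃ (C : Ctx) (Q : Proc), StrEq P (C.fill Q) ∧ InPred a Q

/-- cout(a,P): an output prefix on a occurs anywhere in P. -/
def COutPred (a : ℕ) (P : Proc) : Prop := ∃ (C : Ctx) (Q : Proc), StrEq P (C.fill Q) ∧ OutPred a Q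

/-- P is complete: ∀a. cin(a,P) ⟺ cout(a,P). -/
def Complete (P : Proc) : Prop := ∀ a, CInPred a P ↔ COutPred a P

/-- P is top-complete. -/
def TopComplete (P : Proc) : Prop :=
  ∀ a, (InPred a P → COutPred a P) ∧ (OutPred a P → CInPred a P)

/-- dl(P): P has no reduction and P ≢ 0. -/
def Deadlock (P : Proc) : Prop := (¬ ∃ Q, Red P Q) ∧ ¬ StrEq P nil

/-- Lock-freedom. -/
def LockFree (P : Proc) : Prop :=
  ∀ Q a, Reds P Q → WaitPred a Q → ∃ R, Reds Q R ∧ SyncPred a R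

lemma StrEq.inCount_eq (a : ℕ) {P Q : Proc} (h : StrEq P Q) :
    inCount a P = inCount a Q := by
  induction h with
  | refl => rfl
  | symm _ ih => exact ih.symm
  | trans _ _ ih1 ih2 => exact ih1.trans ih2
  | nilPar => simp [inCount]
  | comm => simp [inCount]; omega
  | assoc => simp [inCount]; omega
  | congPar _ _ ih1 ih2 => simp [inCount, ih1, ih2]
  | congInp _ _ ih => simp [inCount, ih]
  | congOut _ _ ih => simp [inCount, ih]

lemma StrEq.outCount_eq (a : ℕ) {P Q : Proc} (h : StrEq P Q) :
    outCount a P = outCount a Q := by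
  induction h with
  | refl => rfl
  | symm _ ih => exact ih.symm
  | trans _ _ ih1 ih2 => exact ih1.trans ih2
  | nilPar => simp [outCount]
  | comm => simp [outCount]; omega
  | assoc => simp [outCount]; omega
  | congPar _ _ ih1 ih2 => simp [outCount, ih1, ih2]
  | congInp _ _ ih => simp [outCount, ih]
  | congOut _ _ ih => simp [outCount, ih]

lemma StrEq.names_eq {P Q : Proc} (h : StrEq P Q) : names P = names Q := by
  induction h with
  | refl => rfl
  | symm _ ih => exact ih.symm
  | trans _ _ ih1 ih2 => exact ih1.trans ih2
  | nilPar => simp [names]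
  | comm => simp [names, Finset.union_comm]
  | assoc => simp [names, Finset.union_assoc]
  | congPar _ _ ih1 ih2 => simp [names, ih1, ih2]
  | congInp _ _ ih => simp [names, ih]
  | congOut _ _ ih => simp [names, ih]

lemma inPred_streq {a : ℕ} {P Q : Proc} (h : StrEq P Q) (hin : InPred a P) :
    InPred a Q := by
  obtain ⟨P', P'', h'⟩ := hin
  exact ⟨P', P'', h.symm.trans h'⟩

lemma outPred_streq {a : ℕ} {P Q : Proc} (h : StrEq P Q) (hin : OutPred a P) :
    OutPred a Q := by
  obtain ⟨P', P'', h'⟩ := hin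
  exact ⟨P', P'', h.symm.trans h'⟩

/-- (A ‖ B) ‖ C ≡ (A ‖ C) ‖ B -/
lemma streq_rot (A B C : Proc) :
    StrEq (par (par A B) C) (par (par A C) B) :=
  ((StrEq.assoc A B C).symm.trans
    (StrEq.congPar (StrEq.refl A) (StrEq.comm B C))).trans (StrEq.assoc A C B)

lemma inPred_parL {a : ℕ} {P : Proc} (R : Proc) (hin : InPred a P) :
    InPred a (par P R) := by
  obtain ⟨P', P'', h⟩ := hin
  exact ⟨par P' R, P'', (StrEq.congPar h (StrEq.refl R)).trans (streq_rot P' _ R)⟩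

lemma inPred_parR {a : ℕ} (P : Proc) {R : Proc} (hin : InPred a R) :
    InPred a (par P R) :=
  inPred_streq (StrEq.comm R P) (inPred_parL P hin)

lemma outPred_parL {a : ℕ} {P : Proc} (R : Proc) (hin : OutPred a P) :
    OutPred a (par P R) := by
  obtain ⟨P', P'', h⟩ := hin
  exact ⟨par P' R, P'', (StrEq.congPar h (StrEq.refl R)).trans (streq_rot P' _ R)⟩

lemma outPred_parR {a : ℕ} (P : Proc) {R : Proc} (hin : OutPred a R) :
    OutPred a (par P R) :=
  outPred_streq (StrEq.comm R P) (outPred_parL P hin)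

lemma syncPred_parL {a : ℕ} {P : Proc} (R : Proc) (h : SyncPred a P) :
    SyncPred a (par P R) :=
  ⟨inPred_parL R h.1, outPred_parL R h.2⟩

lemma syncPred_parR {a : ℕ} (P : Proc) {R : Proc} (h : SyncPred a R) :
    SyncPred a (par P R) :=
  ⟨inPred_parR P h.1, outPred_parR P h.2⟩

lemma red_cases (a : ℕ) {P Q : Proc} (h : Red P Q) :
    (inCount a Q = inCount a P ∧ outCount a Q = outCount a P) ∨
    (inCount a P = inCount a Q + 1 ∧ outCount a P = outCount a Q + 1 ∧
      names P = insert a (names Q) ∧ SyncPred a P) := by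
  induction h with
  | comm b R S =>
    rcases eq_or_ne a b with rfl | hb
    · right
      refine ⟨by simp [inCount]; omega, by simp [outCount]; omega, ?_, ?_, ?_⟩
      · simp [names, Finset.insert_union, Finset.union_insert]
      · exact ⟨out a S, R, StrEq.comm _ _⟩
      · exact ⟨inp a R, S, StrEq.refl _⟩
    · left; simp [inCount, outCount, Ne.symm hb]
  | parL R _ ih =>
    rcases ih with ⟨h1, h2⟩ | ⟨h1, h2, h3, h4⟩
    · left; simp [inCount, outCount, h1, h2]
    · right
      refine ⟨by simp [inCount, h1]; omega, by simp [outCount, h2]; omega, ?_,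
        syncPred_parL R h4⟩
      simp [names, h3, Finset.insert_union]
  | parR R _ ih =>
    rcases ih with ⟨h1, h2⟩ | ⟨h1, h2, h3, h4⟩
    · left; simp [inCount, outCount, h1, h2]
    · right
      refine ⟨by simp [inCount, h1]; omega, by simp [outCount, h2]; omega, ?_,
        syncPred_parR R h4⟩
      simp [names, h3, Finset.union_insert]
  | str hPP' _ hQ'Q ih =>
    rcases ih with ⟨h1, h2⟩ | ⟨h1, h2, h3, h4⟩
    · left
      rw [hPP'.inCount_eq a, hPP'.outCount_eq a, ← hQ'Q.inCount_eq a, ← hQ'Q.outCount_eq a]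
      exact ⟨h1, h2⟩
    · right
      refine ⟨?_, ?_, ?_, ?_⟩
      · rw [hPP'.inCount_eq a, ← hQ'Q.inCount_eq a]; exact h1
      · rw [hPP'.outCount_eq a, ← hQ'Q.outCount_eq a]; exact h2
      · rw [hPP'.names_eq, ← hQ'Q.names_eq]; exact h3
      · exact ⟨inPred_streq hPP'.symm h4.1, outPred_streq hPP'.symm h4.2⟩

lemma red_names_subset {P Q : Proc} (h : Red P Q) : names Q ⊆ names P := by
  induction h with
  | comm b R S =>
    intro x hx
    simp only [names, Finset.mem_union, Finset.mem_insert] at hx ⊢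
    tauto
  | parL R _ ih =>
    intro x hx
    simp only [names, Finset.mem_union] at hx ⊢
    tauto
  | parR R _ ih =>
    intro x hx
    simp only [names, Finset.mem_union] at hx ⊢
    tauto
  | str hPP' _ hQ'Q ih =>
    rw [hPP'.names_eq, ← hQ'Q.names_eq]; exact ih

lemma mem_names_iff (a : ℕ) (P : Proc) :
    a ∈ names P ↔ 0 < inCount a P + outCount a P := by
  induction P with
  | nil => simp [names, inCount, outCount]
  | inp b P ih =>
    rcases eq_or_ne a b with rfl | hb
    · simp [names, inCount, outCount]
    · simp [names, inCount, outCount, hb, Ne.symm hb, ih]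
  | out b P ih =>
    rcases eq_or_ne a b with rfl | hb
    · simp [names, inCount, outCount]
    · simp [names, inCount, outCount, hb, Ne.symm hb, ih]
  | par P Q ih1 ih2 =>
    simp [names, inCount, outCount, ih1, ih2]; omega

lemma fill_inCount_le (a : ℕ) (C : Ctx) (Q : Proc) :
    inCount a Q ≤ inCount a (C.fill Q) := by
  induction C with
  | hole => exact le_refl _
  | parL P C ih => simp [Ctx.fill, inCount]; omega
  | parR C P ih => simp [Ctx.fill, inCount]; omega
  | inp b C ih => simp [Ctx.fill, inCount]; omega
  | out b C ih => simp [Ctx.fill, inCount]; omega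

lemma inPred_self (a : ℕ) (P : Proc) : InPred a (inp a P) :=
  ⟨nil, P, ((StrEq.comm nil (inp a P)).trans (StrEq.nilPar _)).symm⟩

lemma cin_iff_pos (a : ℕ) (P : Proc) : CInPred a P ↔ 0 < inCount a P := by
  constructor
  · rintro ⟨C, R, hst, P', P'', hin⟩
    rw [hst.inCount_eq a]
    have h1 := fill_inCount_le a C R
    have h2 := hin.inCount_eq a
    simp [inCount] at h2
    omega
  · intro hpos
    induction P with
    | nil => simp [inCount] at hpos
    | inp b P ih =>
      rcases eq_or_ne a b with rfl | hb
      · exact ⟨Ctx.hole, inp a P, StrEq.refl _, inPred_self a P⟩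
      · simp [inCount, Ne.symm hb] at hpos
        obtain ⟨C, R, hst, hin⟩ := ih hpos
        exact ⟨Ctx.inp b C, R, StrEq.congInp b hst, hin⟩
    | out b P ih =>
      simp [inCount] at hpos
      obtain ⟨C, R, hst, hin⟩ := ih hpos
      exact ⟨Ctx.out b C, R, StrEq.congOut b hst, hin⟩
    | par P Q ih1 ih2 =>
      simp [inCount] at hpos
      by_cases h : 0 < inCount a P
      · obtain ⟨C, R, hst, hin⟩ := ih1 h
        exact ⟨Ctx.parR C Q, R, StrEq.congPar hst (StrEq.refl Q), hin⟩
      · obtain ⟨C, R, hst, hin⟩ := ih2 (by omega)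
        exact ⟨Ctx.parL P C, R, StrEq.congPar (StrEq.refl P) hst, hin⟩

lemma reds_outCount_le (a : ℕ) {P Q : Proc} (h : Reds P Q) :
    outCount a Q ≤ outCount a P := by
  induction h with
  | refl => exact le_refl _
  | tail _ hstep ih =>
    rcases red_cases a hstep with ⟨_, h2⟩ | ⟨_, h2, _, _⟩ <;> omega

lemma key_lemma (a : ℕ) {P Q : Proc} (hin1 : inCount a P = 1)
    (hout : outCount a P ≤ 1) (h : Reds P Q) :
    inCount a Q = 1 ∨
    (a ∉ names Q ∧ ∃ Ra Ra' : Proc, Reds P Ra ∧ Red Ra Ra' ∧ Reds Ra' Q ∧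
      a ∉ names Ra' ∧ names Ra = insert a (names Ra') ∧ SyncPred a Ra) := by
  induction h with
  | refl => exact Or.inl hin1
  | @tail Q' Q hsteps hstep ih =>
    rcases ih with h1 | ⟨hn, Ra, Ra', r1, r2, r3, r4, r5, r6⟩
    · rcases red_cases a hstep with ⟨e1, _⟩ | ⟨e1, e2, e3, e4⟩
      · left; omega
      · right
        have hiQ : inCount a Q = 0 := by omega
        have hoQ' : outCount a Q' ≤ 1 := (reds_outCount_le a hsteps).trans hout
        have hoQ : outCount a Q = 0 := by omega
        have hnQ : a ∉ names Q := by
          rw [mem_names_iff]; omega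
        exact ⟨hnQ, Q', Q, hsteps, hstep, Relation.ReflTransGen.refl,
          hnQ, e3, e4⟩
    · right
      refine ⟨fun hx => hn (red_names_subset hstep hx), Ra, Ra', r1, r2,
        r3.tail hstep, r4, r5, r6⟩

theorem cin_persistent {P Q : Proc} (a : ℕ) (hlin : Linear P)
    (hcin : CInPred a P) (h : Reds P Q) :
    Xor' (CInPred a Q)
      (a ∉ names Q ∧ ∃ Ra Ra' : Proc, Reds P Ra ∧ Red Ra Ra' ∧ Reds Ra' Q ∧
        a ∉ names Ra' ∧ names Ra = insert a (names Ra') ∧ SyncPred a Ra) := by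
  have hin1 : inCount a P = 1 := by
    have h1 := (cin_iff_pos a P).mp hcin
    have h2 := (hlin a).1
    omega
  rcases key_lemma a hin1 (hlin a).2 h with h1 | h2
  · left
    refine ⟨(cin_iff_pos a Q).mpr (by omega), ?_⟩
    rintro ⟨hn, -⟩
    exact hn ((mem_names_iff a Q).mpr (by omega))
  · right
    refine ⟨h2, fun hc => h2.1 ?_⟩
    have := (cin_iff_pos a Q).mp hc
    exact (mem_names_iff a Q).mpr (by omega)
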